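/- Define p_z(\lambda) = \frac{-1}{\sqrt{2N} y}(cN|z|^2 - bx + a) and q_z(\lambda) = \frac{-1}{\sqrt{2N}}(cNz^2 - bz + a) for z = x + iy in the upper half plane and \lambda = \begin{pmatrix} b/2N & -a/N \\ c & -b/2N \end{pmatrix}. Then for all \gamma \in SL_2(\mathbb{R}) acting by \gamma.\lambda = \gamma\lambda\gamma^{-1} and fractional linear transformation on z, one has q_{\gamma z}(\gamma.\lambda) = j(\gamma, z)^{-2} q_z(\lambda), where j(\gamma, z) = cz + d for \gamma = \begin{pmatrix} a & b \\ c & d \end{pmatrix}. -/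

import Mathlib

/-!
Up to the constant `-N/√(2N)`, `q_z(λ)` is the binary quadratic form `Q_λ(v) = det[v, λv]`
evaluated at `v = (z, 1)`. Conjugating `λ` by `γ` and moving `v` to `γv` multiplies `Q` by
`(det γ)² = 1`, because `(γ λ adj γ)(γ v) = det γ • γ (λ v)`. Finally `γ (z, 1) = j(γ, z) (γz, 1)`
and `Q` is homogeneous of degree two, which produces the factor `j(γ, z)⁻²`.
-/

open Matrix

/-- For a trace-zero real matrix `λ = (b/2N, -a/N; c, -b/2N)` (so that
`b = 2N λ₀₀`, `a = -N λ₀₁`, `c = λ₁₀`) and `z ∈ ℍ`, the quantity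
`q_z(λ) = -(1/√(2N)) (cN z² - b z + a)`. -/
noncomputable def qz (N : ℕ) (z : ℂ) (lam : Matrix (Fin 2) (Fin 2) ℝ) : ℂ :=
  (-1 / (Real.sqrt (2 * N) : ℂ)) *
    ((lam 1 0 : ℝ) * (N : ℂ) * z ^ 2 - (2 * (N : ℝ) * lam 0 0 : ℝ) * z + (-(N : ℝ) * lam 0 1 : ℝ))

namespace Matrix

theorem map_fin_two_of {α β : Type*} (f : α → β) (a b c d : α) :
    !![a, b; c, d].map f = !![f a, f b; f c, f d] := by
  ext i j
  fin_cases i <;> fin_cases j <;> rfl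

section CommRing

variable {R : Type*} [CommRing R]

/-- For `A = !![a, b; c, -a]` this is the binary quadratic form `c x² - 2a x y - b y²`,
the image of `A` under `sl₂ ≅ Sym²`. -/
def quadForm (A : Matrix (Fin 2) (Fin 2) R) (v : Fin 2 → R) : R :=
  (of ![v, A *ᵥ v]).det

theorem det_of_mulVec_mulVec (g : Matrix (Fin 2) (Fin 2) R) (u w : Fin 2 → R) :
    (of ![g *ᵥ u, g *ᵥ w]).det = g.det * (of ![u, w]).det := by
  simp only [det_fin_two, mulVec, dotProduct, Fin.sum_univ_two, of_apply, cons_val_zero,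
    cons_val_one]
  ring

theorem quadForm_smul (A : Matrix (Fin 2) (Fin 2) R) (c : R) (v : Fin 2 → R) :
    quadForm A (c • v) = c ^ 2 * quadForm A v := by
  simp only [quadForm, det_fin_two, mulVec_smul, of_apply, cons_val_zero, cons_val_one,
    Pi.smul_apply, smul_eq_mul]
  ring

theorem quadForm_conj (g A : Matrix (Fin 2) (Fin 2) R) (v : Fin 2 → R) :
    quadForm (g * A * adjugate g) (g *ᵥ v) = g.det ^ 2 * quadForm A v := by
  have hmulVec : (g * A * adjugate g) *ᵥ (g *ᵥ v) = g *ᵥ (g.det • A *ᵥ v) := by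
    rw [mulVec_mulVec, mul_assoc, adjugate_mul, Matrix.mul_smul, mul_one, mulVec_smul,
      mulVec_mulVec, smul_mulVec]
  calc quadForm (g * A * adjugate g) (g *ᵥ v)
      = g.det * (of ![v, g.det • A *ᵥ v]).det := by
        rw [quadForm, hmulVec, det_of_mulVec_mulVec]
    _ = g.det ^ 2 * quadForm A v := by
        simp only [quadForm, det_fin_two, of_apply, cons_val_zero, cons_val_one, Pi.smul_apply,
          smul_eq_mul]
        ring

theorem quadForm_vecCons_one (A : Matrix (Fin 2) (Fin 2) R) (x : R) :
    quadForm A ![x, 1] = A 1 0 * x ^ 2 + (A 1 1 - A 0 0) * x - A 0 1 := by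
  simp [quadForm, det_fin_two]
  ring

theorem trace_mul_mul_adjugate (g A : Matrix (Fin 2) (Fin 2) R) :
    (g * A * adjugate g).trace = g.det * A.trace := by
  rw [trace_mul_comm, ← mul_assoc, adjugate_mul, smul_mul, one_mul, trace_smul, smul_eq_mul]

end CommRing

theorem quadForm_conj_moebius {K : Type*} [Field K] (g A : Matrix (Fin 2) (Fin 2) K) {x : K}
    (hx : g 1 0 * x + g 1 1 ≠ 0) :
    (g 1 0 * x + g 1 1) ^ 2 *
        quadForm (g * A * adjugate g) ![(g 0 0 * x + g 0 1) / (g 1 0 * x + g 1 1), 1]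
      = g.det ^ 2 * quadForm A ![x, 1] := by
  have hmulVec : g *ᵥ ![x, 1] =
      (g 1 0 * x + g 1 1) • ![(g 0 0 * x + g 0 1) / (g 1 0 * x + g 1 1), 1] := by
    ext i
    fin_cases i <;> simp [mulVec, dotProduct, Fin.sum_univ_two, mul_div_cancel₀ _ hx]
  rw [← quadForm_smul, ← hmulVec, quadForm_conj]

end Matrix

theorem qz_eq_quadForm (N : ℕ) (z : ℂ) {lam : Matrix (Fin 2) (Fin 2) ℝ} (hlam : lam.trace = 0) :
    qz N z lam = -N / Real.sqrt (2 * N) * quadForm (lam.map Complex.ofRealHom) ![z, 1] := by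
  have h11 : lam 1 1 = -lam 0 0 := by
    rw [trace_fin_two] at hlam
    linarith
  simp only [qz, quadForm_vecCons_one, map_apply, Complex.ofRealHom_eq_coe, h11]
  push_cast
  ring

theorem qz_equivariance_general (N : ℕ) (p q r s : ℝ) (hdet : p * s - q * r = 1)
    (z : ℂ) (hz : 0 < z.im) (lam : Matrix (Fin 2) (Fin 2) ℝ) (hlam : lam.trace = 0) :
    qz N (((p : ℂ) * z + q) / ((r : ℂ) * z + s))
        (!![p, q; r, s] * lam * !![s, -q; -r, p])
      = ((r : ℂ) * z + s) ^ (-2 : ℤ) * qz N z lam := by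
  have hj : (r : ℂ) * z + s ≠ 0 := by
    refine UpperHalfPlane.linear_ne_zero_of_im (cd := ![r, s]) hz.ne' fun h ↦ ?_
    have hr : r = 0 := congrFun h 0
    have hs : s = 0 := congrFun h 1
    simp [hr, hs] at hdet
  rw [← adjugate_fin_two_of]
  have hconj : (!![p, q; r, s] * lam * adjugate !![p, q; r, s]).map Complex.ofRealHom
      = !![(p : ℂ), q; r, s] * lam.map Complex.ofRealHom * adjugate !![(p : ℂ), q; r, s] := by
    rw [Matrix.map_mul, Matrix.map_mul, adjugate_fin_two_of, adjugate_fin_two_of,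
      map_fin_two_of, map_fin_two_of]
    simp only [map_neg, Complex.ofRealHom_eq_coe]
  have hdetC : det !![(p : ℂ), q; r, s] = 1 := by
    rw [det_fin_two_of]
    exact_mod_cast hdet
  have htrace : (!![p, q; r, s] * lam * adjugate !![p, q; r, s]).trace = 0 := by
    rw [trace_mul_mul_adjugate, hlam, mul_zero]
  have hmoebius := quadForm_conj_moebius !![(p : ℂ), q; r, s] (lam.map Complex.ofRealHom)
    (x := z) (by simpa using hj)
  simp only [of_apply, cons_val', cons_val_zero, cons_val_one, empty_val', cons_val_fin_one,
    hdetC, one_pow, one_mul] at hmoebius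
  rw [qz_eq_quadForm N _ htrace, qz_eq_quadForm N z hlam, hconj, ← hmoebius, _root_.zpow_neg,
    zpow_ofNat, mul_left_comm, inv_mul_cancel_left₀ (pow_ne_zero 2 hj)]

/-- For `γ = (p, q; r, s) ∈ SL₂(ℝ)` acting by conjugation on trace-zero
matrices and by fractional linear transformations on `ℍ`,
`q_{γz}(γ.λ) = j(γ,z)⁻² q_z(λ)` where `j(γ,z) = rz + s`. -/
theorem qz_equivariance (N : ℕ) (hN : 0 < N) (p q r s : ℝ) (hdet : p * s - q * r = 1)
    (z : ℂ) (hz : 0 < z.im) (lam : Matrix (Fin 2) (Fin 2) ℝ) (hlam : lam.trace = 0) :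
    qz N (((p : ℂ) * z + q) / ((r : ℂ) * z + s))
        (!![p, q; r, s] * lam * !![s, -q; -r, p])
      = ((r : ℂ) * z + s) ^ (-2 : ℤ) * qz N z lam :=
  qz_equivariance_general N p q r s hdet z hz lam hlam
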